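/- arXiv:1406.7608 — 4 statements merged into one kernel-verified Lean document; each statement's English description precedes it below -/
import Mathlib

section
/- For interleaving parameterized token-ring systems with no global inputs and parameterized specifications ∀i. A_{∀i.ass(i)} φ(i), where φ(i) and ass(i) are LTL formulas over the inputs and outputs of process i, the number 2 is a cutoff: for every process template P, P^{R(2)} ⊨ ∀i. A_{∀i.ass(i)} φ(i) if and only if P^{R(n)} ⊨ ∀i. A_{∀i.ass(i)} φ(i) for all n ≥ 2. -/
/-! ## Deeply embedded LTL -/

/-- LTL formulas over atomic propositions of type `α`. -/
inductive LTL (α : Type) : Type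
  | tru : LTL α
  | atom : α → LTL α
  | neg : LTL α → LTL α
  | conj : LTL α → LTL α → LTL α
  | next : LTL α → LTL α
  | untl : LTL α → LTL α → LTL α

namespace LTL

/-- Satisfaction of an LTL formula at position `k` of the infinite word `w`
(a word assigns to each position the set of atomic propositions holding there). -/
def Sat {α : Type} (w : ℕ → α → Prop) : LTL α → ℕ → Prop
  | tru, _ => True
  | atom a, k => w k a
  | neg φ, k => ¬ Sat w φ k
  | conj φ ψ, k => Sat w φ k ∧ Sat w ψ k
  | next φ, k => Sat w φ (k + 1)
  | untl φ ψ, k => ∃ m, k ≤ m ∧ Sat w ψ m ∧ ∀ l, k ≤ l → l < m → Sat w φ l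

/-- `LTL\X` : formulas not using the next-time operator. -/
def NoNext {α : Type} : LTL α → Prop
  | tru => True
  | atom _ => True
  | neg φ => NoNext φ
  | conj φ ψ => NoNext φ ∧ NoNext ψ
  | next _ => False
  | untl φ ψ => NoNext φ ∧ NoNext ψ

/-- Implication, as a derived connective. -/
def imp {α : Type} (φ ψ : LTL α) : LTL α := neg (conj φ (neg ψ))

/-- "Eventually" (◇). -/
def ev {α : Type} (φ : LTL α) : LTL α := untl tru φ

/-- "Always" (□). -/
def alw {α : Type} (φ : LTL α) : LTL α := neg (ev (neg φ))

end LTL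

/-- Boolean (propositional) formulas over atoms of type `α`. -/
inductive PropForm (α : Type) : Type
  | tru : PropForm α
  | atom : α → PropForm α
  | neg : PropForm α → PropForm α
  | conj : PropForm α → PropForm α → PropForm α

/-- A propositional formula over input variables, seen as an LTL formula over
output-or-input atoms (inputs are injected on the right). -/
def PropForm.toLTL {O I : Type} : PropForm I → LTL (O ⊕ I)
  | .tru => .tru
  | .atom a => .atom (Sum.inr a)
  | .neg p => .neg p.toLTL
  | .conj p q => .conj p.toLTL q.toLTL

/-! ## Process templates and token rings -/

/-- The ring successor `v ⊕ 1` of a vertex of the ring `R(n)`. -/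
def ringSucc {n : ℕ} (v : Fin n) : Fin n :=
  ⟨(v.val + 1) % n, Nat.mod_lt _ (Nat.lt_of_le_of_lt (Nat.zero_le _) v.isLt)⟩

/-- The raw data of a process: token states, output labelling, the two initial
states (with/without token) and the transition relation, over output variables `O`
and input variables `I` (an input letter is a set of input variables). -/
structure RawProc (Q O I : Type) : Type where
  tok : Q → Prop
  lam : Q → O → Prop
  iotaT : Q
  iotaN : Q
  delta : Q → (I → Prop) → Q → Prop

namespace RawProc

variable {Q O I : Type}

/-- Internal transition of the token ring: the processes in `M` simultaneously take
transitions, none of them sends (`snd`) or receives (`rcv`) the token, all others keep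
their state. -/
def internalStep (P : RawProc Q O I) (snd : O) (rcv : I) {n : ℕ} (M : Set (Fin n))
    (s : Fin n → Q) (inp : Fin n → I → Prop) (s' : Fin n → Q) : Prop :=
  (∀ v ∈ M, ¬ P.lam (s v) snd ∧ ¬ inp v rcv ∧ P.delta (s v) (inp v) (s' v)) ∧
    ∀ v, v ∉ M → s' v = s v

/-- Token-passing transition with sender `v`: `v ∈ M` is the only process of `M`
outputting `snd`, its ring successor is in `M` and is the only process of `M` reading
`rcv`; all processes of `M` take transitions, all others keep their state. -/
def tokenStepFrom (P : RawProc Q O I) (snd : O) (rcv : I) {n : ℕ} (v : Fin n)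
    (M : Set (Fin n)) (s : Fin n → Q) (inp : Fin n → I → Prop) (s' : Fin n → Q) : Prop :=
  v ∈ M ∧ ringSucc v ∈ M ∧
  P.lam (s v) snd ∧ (∀ u ∈ M, u ≠ v → ¬ P.lam (s u) snd) ∧
  inp (ringSucc v) rcv ∧ (∀ u ∈ M, u ≠ ringSucc v → ¬ inp u rcv) ∧
  (∀ u ∈ M, P.delta (s u) (inp u) (s' u)) ∧
  ∀ u, u ∉ M → s' u = s u

/-- Global transition of the *fully asynchronous* token ring. -/
def asyncStep (P : RawProc Q O I) (snd : O) (rcv : I) {n : ℕ} (M : Set (Fin n))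
    (s : Fin n → Q) (inp : Fin n → I → Prop) (s' : Fin n → Q) : Prop :=
  P.internalStep snd rcv M s inp s' ∨ ∃ v, P.tokenStepFrom snd rcv v M s inp s'

/-- Global transition of the *interleaving* token ring: exactly one process takes an
internal transition, or one process passes the token to its ring successor. -/
def interleavingStep (P : RawProc Q O I) (snd : O) (rcv : I) {n : ℕ} (M : Set (Fin n))
    (s : Fin n → Q) (inp : Fin n → I → Prop) (s' : Fin n → Q) : Prop :=
  (∃ v : Fin n, M = {v} ∧ P.internalStep snd rcv M s inp s') ∨
  (∃ v : Fin n, M = {v, ringSucc v} ∧ P.tokenStepFrom snd rcv v M s inp s')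

/-- Global transition of the *synchronous* token ring: all processes move. -/
def syncStep (P : RawProc Q O I) (snd : O) (rcv : I) {n : ℕ} (M : Set (Fin n))
    (s : Fin n → Q) (inp : Fin n → I → Prop) (s' : Fin n → Q) : Prop :=
  M = Set.univ ∧ P.asyncStep snd rcv M s inp s'

/-- Condition (a): in every sending state the process ignores its inputs —
there is a unique successor, the same for every input letter. -/
def CondA (P : RawProc Q O I) (snd : O) : Prop :=
  ∀ q, P.lam q snd → ∃ q', ∀ (ins : I → Prop) (q'' : Q), P.delta q ins q'' ↔ q'' = q'

/-- The axioms making raw process data a process template (for distinguished output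
`snd` and input `rcv`): the initial states have/lack the token, only token states can
output `snd`, transitions respect the token structure, and the transition relation is
non-terminating. -/
def IsTemplate (P : RawProc Q O I) (snd : O) (rcv : I) : Prop :=
  P.tok P.iotaT ∧ ¬ P.tok P.iotaN ∧
  (∀ q, P.lam q snd → P.tok q) ∧
  (∀ q ins q', P.delta q ins q' →
      (P.tok q → ¬ ins rcv) ∧
      (P.lam q snd → ¬ P.tok q') ∧
      (P.tok q → ¬ P.lam q snd → P.tok q') ∧
      (¬ P.tok q → ins rcv → P.tok q') ∧
      (¬ P.tok q → ¬ ins rcv → ¬ P.tok q')) ∧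
  (∀ q ins, (P.tok q → ¬ ins rcv) → ∃ q', P.delta q ins q')

end RawProc

/-- A process template over output variables `O` (with distinguished `snd`)
and input variables `I` (with distinguished `rcv`): a finite-state labelled
transition system satisfying the token-ring template axioms. -/
structure Template (O I : Type) (snd : O) (rcv : I) : Type 1 where
  Q : Type
  P : RawProc Q O I
  finQ : Finite Q
  ax : P.IsTemplate snd rcv

/-- A process template together with a local fairness condition `A_loc` (over the
input and output variables) and the requirement (†): from every token state, under
any input sequence such that the resulting local input/output sequence satisfies the
fairness condition, the process eventually reaches a state sending the token. -/
structure TemplateF (O I : Type) (snd : O) (rcv : I) extends Template O I snd rcv where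
  fairCond : (ℕ → (I → Prop) × (O → Prop)) → Prop
  tokenLive : ∀ q, P.tok q → ∀ (ins : ℕ → I → Prop) (path : ℕ → Q),
    path 0 = q → (∀ k, P.delta (path k) (ins k) (path (k + 1))) →
    fairCond (fun k => (ins k, P.lam (path k))) → ∃ k, P.lam (path k) snd

/-- The type of global step relations of a ring of `n` processes with state set `Q`
and input variables `I`. -/
abbrev StepRel (Q I : Type) (n : ℕ) : Type :=
  Set (Fin n) → (Fin n → Q) → (Fin n → I → Prop) → (Fin n → Q) → Prop

/-- A run of a token-ring system built from the process `P`, with global inputs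
designated by `isGlob` (global inputs are read identically by all processes),
ring size `n`, and global step relation `R`: an infinite sequence of global states,
input assignments and scheduled sets `M_k`, starting in an initial global state
(each process in one of its initial states, exactly one process having the token). -/
structure SysRun {Q O I : Type} (P : RawProc Q O I) (isGlob : I → Prop) (n : ℕ)
    (R : StepRel Q I n) : Type where
  state : ℕ → Fin n → Q
  inp : ℕ → Fin n → I → Prop
  sched : ℕ → Set (Fin n)
  init_state : ∀ v, state 0 v = P.iotaT ∨ state 0 v = P.iotaN
  init_token : ∃! v, P.tok (state 0 v)
  glob_consistent : ∀ k v w a, isGlob a → (inp k v a ↔ inp k w a)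
  step : ∀ k, R (sched k) (state k) (inp k) (state (k + 1))

namespace SysRun

variable {Q O I : Type} {P : RawProc Q O I} {isGlob : I → Prop} {n : ℕ} {R : StepRel Q I n}

/-- Process `j` makes transitions infinitely often along the run. -/
def MovesInf (x : SysRun P isGlob n R) (j : Fin n) : Prop :=
  {k : ℕ | j ∈ x.sched k}.Infinite

/-- The position (in the run) of the `t`-th transition of process `j`. -/
noncomputable def localIdx (x : SysRun P isGlob n R) (j : Fin n) (t : ℕ) : ℕ :=
  Nat.nth (fun k => j ∈ x.sched k) t

/-- The local run of process `j`, as an infinite word over the atomic propositions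
`O ⊕ I` (outputs and inputs of process `j`): the projection of the run to the
positions where `j` makes a transition. -/
noncomputable def localWord (x : SysRun P isGlob n R) (j : Fin n) : ℕ → O ⊕ I → Prop :=
  fun t => Sum.elim (P.lam (x.state (x.localIdx j t) j)) (x.inp (x.localIdx j t) j)

/-- The local run of process `j` satisfies the LTL formula `φ` over the inputs
and outputs of a single process (vacuously, if `j` moves only finitely often). -/
def LocalSat (x : SysRun P isGlob n R) (φ : LTL (O ⊕ I)) (j : Fin n) : Prop :=
  x.MovesInf j → LTL.Sat (x.localWord j) φ 0

/-- The global output word of the pair of processes `(i, j)`, over the atomic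
propositions `O ⊕ O` (outputs of `i` and of `j`). -/
def outWord2 (x : SysRun P isGlob n R) (i j : Fin n) : ℕ → O ⊕ O → Prop :=
  fun k => Sum.elim (P.lam (x.state k i)) (P.lam (x.state k j))

/-- The run satisfies the 2-indexed formula `ψ(i,j)` (over outputs only),
evaluated on the global output sequence. -/
def Sat2At (x : SysRun P isGlob n R) (ψ : LTL (O ⊕ O)) (i j : Fin n) : Prop :=
  LTL.Sat (x.outWord2 i j) ψ 0

end SysRun

/-- The system satisfies `A_{∀i.ass(i)} ∀j.φ(j)`: every run all of whose local runs
satisfy `ass` has all of its local runs satisfying `φ`. -/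
def SatSpec1 {Q O I : Type} (P : RawProc Q O I) (isGlob : I → Prop) (n : ℕ)
    (R : StepRel Q I n) (ass φ : LTL (O ⊕ I)) : Prop :=
  ∀ x : SysRun P isGlob n R, (∀ i, x.LocalSat ass i) → ∀ j, x.LocalSat φ j

/-- The system satisfies `A_{∀i.ass(i)} ∀i,j.ψ(i,j)`. -/
def SatSpec2 {Q O I : Type} (P : RawProc Q O I) (isGlob : I → Prop) (n : ℕ)
    (R : StepRel Q I n) (ass : LTL (O ⊕ I)) (ψ : LTL (O ⊕ O)) : Prop :=
  ∀ x : SysRun P isGlob n R, (∀ i, x.LocalSat ass i) → ∀ i j, i ≠ j → x.Sat2At ψ i j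

/-- The system satisfies `∀i,j. A ψ(i,j)` (no assumptions). -/
def SatSpec2NoAss {Q O I : Type} (P : RawProc Q O I) (isGlob : I → Prop) (n : ℕ)
    (R : StepRel Q I n) (ψ : LTL (O ⊕ O)) : Prop :=
  ∀ x : SysRun P isGlob n R, ∀ i j, i ≠ j → x.Sat2At ψ i j

/-!
Fix a run of the `n`-ring and a process `j` that moves infinitely often. Number the token passes
`0, 1, 2, …`; since there is one token, pass `i` goes from `p ⊕ i` to `p ⊕ (i + 1)`, where `p`
is the initial holder. Counting residues mod `n` shows that, for `c = p` (or `c = j ⊕ 1` if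
`j = p`), at every time `j` has received the token at most as often as `c` has sent it.

That inequality is all it takes to replay `j` and `c` as processes `0` and `1` of a 2-ring.
Process `0` copies the moves of `j` one by one. Before a token move of `j`, process `1` copies the
internal moves of `c` up to the next token move of `c`, and the two token moves are made together
as one pass: exactly one of the two holds the token, so one sends and the other receives. If `c`
never makes another token move, the inequality shows that `j` is sending and will never receive
again; process `1` then takes the token by a synthetic receive and stops. So process `0` has the
local run of `j` and process `1`, if it moves infinitely often, that of `c`, and the 2-ring
specification carries over to `j`.
-/

open Classical

namespace Nat

theorem count_eq_of_forall_not {p : ℕ → Prop} [DecidablePred p] {a b : ℕ} (hab : a ≤ b)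
    (h : ∀ t, a ≤ t → t < b → ¬ p t) : count p b = count p a := by
  obtain ⟨c, rfl⟩ := Nat.exists_eq_add_of_le hab
  rw [count_add, (count_iff_forall_not).2 fun t ht => h (a + t) (by omega) (by omega),
    Nat.add_zero]

theorem count_and_comp_count (q f : ℕ → Prop) [DecidablePred q] [DecidablePred f] (τ : ℕ) :
    count (fun t => q t ∧ f (count q t)) τ = count f (count q τ) := by
  induction τ with
  | zero => simp
  | succ τ ih => by_cases hq : q τ <;> simp [count_succ, hq, ih]

theorem count_modEq_le_count_modEq {n d e : ℕ} (hn : 0 < n) (h : d % n ≤ e % n) (N : ℕ) :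
    count (· ≡ e [MOD n]) N ≤ count (· ≡ d [MOD n]) N := by
  rw [count_modEq_card _ hn, count_modEq_card _ hn]
  split_ifs <;> omega

end Nat

theorem ringSucc_ne_self {n : ℕ} (hn : 2 ≤ n) (v : Fin n) : ringSucc v ≠ v := by
  intro h
  have h' := congrArg Fin.val h
  simp only [ringSucc] at h'
  rcases Nat.lt_or_ge (v.val + 1) n with hv | hv
  · rw [Nat.mod_eq_of_lt hv] at h'; omega
  · rw [show v.val + 1 = n by omega, Nat.mod_self] at h'; omega

theorem ringSucc_iterate_val {n : ℕ} (v : Fin n) (i : ℕ) :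
    (ringSucc^[i] v).val = (v.val + i) % n := by
  induction i with
  | zero => exact (Nat.mod_eq_of_lt v.isLt).symm
  | succ i ih =>
    rw [Function.iterate_succ_apply']
    change ((ringSucc^[i] v).val + 1) % n = _
    rw [ih, Nat.mod_add_mod, Nat.add_assoc]

theorem ringSucc_iterate_eq_iff {n : ℕ} (p v : Fin n) (i : ℕ) :
    ringSucc^[i] p = v ↔ i ≡ v.val + n - p.val [MOD n] := by
  have key : (p.val + i) % n = v.val ↔ p.val + i ≡ p.val + (v.val + n - p.val) [MOD n] := by
    rw [show p.val + (v.val + n - p.val) = v.val + n by omega, Nat.ModEq, Nat.add_mod_right,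
      Nat.mod_eq_of_lt v.isLt]
  rw [Fin.ext_iff, ringSucc_iterate_val, key]
  exact ⟨Nat.ModEq.add_left_cancel' _, Nat.ModEq.add_left _⟩

namespace RawProc

variable {Q O I : Type}

noncomputable def receiveSucc (P : RawProc Q O I) (rcv : I) (q : Q) : Q :=
  if h : ∃ q', P.delta q (· = rcv) q' then h.choose else q

namespace IsTemplate

variable {P : RawProc Q O I} {snd : O} {rcv : I} {q q' : Q} {i : I → Prop}

theorem tok_of_snd (hP : P.IsTemplate snd rcv) (h : P.lam q snd) : P.tok q := hP.2.2.1 q h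

theorem not_rcv_of_tok (hP : P.IsTemplate snd rcv) (hδ : P.delta q i q') (h : P.tok q) :
    ¬ i rcv :=
  (hP.2.2.2.1 q i q' hδ).1 h

theorem not_tok_of_snd (hP : P.IsTemplate snd rcv) (hδ : P.delta q i q') (h : P.lam q snd) :
    ¬ P.tok q' :=
  (hP.2.2.2.1 q i q' hδ).2.1 h

theorem tok_of_rcv (hP : P.IsTemplate snd rcv) (hδ : P.delta q i q') (h : i rcv) : P.tok q' :=
  (hP.2.2.2.1 q i q' hδ).2.2.2.1 (fun ht => hP.not_rcv_of_tok hδ ht h) h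

theorem tok_iff_of_internal (hP : P.IsTemplate snd rcv) (hδ : P.delta q i q')
    (hs : ¬ P.lam q snd) (hr : ¬ i rcv) : P.tok q' ↔ P.tok q := by
  obtain ⟨-, -, h1, -, h2⟩ := hP.2.2.2.1 q i q' hδ
  exact ⟨fun h => by_contra fun hq => h2 hq hr h, fun h => h1 h hs⟩

theorem snd_iff_tok (hP : P.IsTemplate snd rcv) (hδ : P.delta q i q')
    (h : P.lam q snd ∨ i rcv) : P.lam q snd ↔ P.tok q :=
  ⟨hP.tok_of_snd, fun ht => h.resolve_right (hP.not_rcv_of_tok hδ ht)⟩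

theorem rcv_iff_not_tok (hP : P.IsTemplate snd rcv) (hδ : P.delta q i q')
    (h : P.lam q snd ∨ i rcv) : i rcv ↔ ¬ P.tok q :=
  ⟨fun hr ht => hP.not_rcv_of_tok hδ ht hr,
    fun ht => h.resolve_left fun hs => ht (hP.tok_of_snd hs)⟩

theorem delta_receiveSucc (hP : P.IsTemplate snd rcv) (h : ¬ P.tok q) :
    P.delta q (· = rcv) (P.receiveSucc rcv q) := by
  have hex : ∃ q', P.delta q (· = rcv) q' := hP.2.2.2.2 q _ fun ht => absurd ht h
  rw [receiveSucc, dif_pos hex]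
  exact hex.choose_spec

end IsTemplate

end RawProc

namespace SysRun

variable {Q O I : Type} {P : RawProc Q O I} {isGlob : I → Prop} {n : ℕ} {R : StepRel Q I n}

def Sends (x : SysRun P isGlob n R) (snd : O) (v : Fin n) (τ : ℕ) : Prop :=
  v ∈ x.sched τ ∧ P.lam (x.state τ v) snd

def Receives (x : SysRun P isGlob n R) (rcv : I) (v : Fin n) (τ : ℕ) : Prop :=
  v ∈ x.sched τ ∧ x.inp τ v rcv

def TokenMove (x : SysRun P isGlob n R) (snd : O) (rcv : I) (v : Fin n) (τ : ℕ) : Prop :=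
  x.Sends snd v τ ∨ x.Receives rcv v τ

noncomputable def passCount (x : SysRun P isGlob n R) (snd : O) (τ : ℕ) : ℕ :=
  Nat.count (fun t => ∃ v, x.Sends snd v t) τ

-- `sInf ∅ = 0`: meaningful only when `v` moves at some time `≥ s`.
noncomputable def nextMove (x : SysRun P isGlob n R) (v : Fin n) (s : ℕ) : ℕ :=
  sInf {τ | s ≤ τ ∧ v ∈ x.sched τ}

theorem MovesInf.exists_ge {x : SysRun P isGlob n R} {v : Fin n} (h : x.MovesInf v) (s : ℕ) :
    ∃ τ, s ≤ τ ∧ v ∈ x.sched τ :=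
  let ⟨τ, hτ, hsτ⟩ := h.exists_gt s
  ⟨τ, hsτ.le, hτ⟩

section nextMove

variable (x : SysRun P isGlob n R) {v : Fin n} {s : ℕ}

theorem nextMove_spec (h : ∃ τ, s ≤ τ ∧ v ∈ x.sched τ) :
    s ≤ x.nextMove v s ∧ v ∈ x.sched (x.nextMove v s) ∧
      ∀ t, s ≤ t → t < x.nextMove v s → v ∉ x.sched t :=
  ⟨(Nat.sInf_mem h).1, (Nat.sInf_mem h).2,
    fun _ hst ht hv => Nat.notMem_of_lt_sInf ht ⟨hst, hv⟩⟩

theorem count_nextMove_succ (h : ∃ τ, s ≤ τ ∧ v ∈ x.sched τ) {p : ℕ → Prop}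
    [DecidablePred p] (hp : ∀ τ, p τ → v ∈ x.sched τ) :
    Nat.count p (x.nextMove v s + 1) = Nat.count p s + if p (x.nextMove v s) then 1 else 0 := by
  obtain ⟨hs, -, hgap⟩ := x.nextMove_spec h
  rw [Nat.count_succ, Nat.count_eq_of_forall_not hs fun t h1 h2 ht => hgap t h1 h2 (hp t ht)]

end nextMove

section interleaving

variable {snd : O} {rcv : I} (x : SysRun P isGlob n (P.interleavingStep snd rcv))

theorem state_succ_of_not_mem {v : Fin n} {τ : ℕ} (h : v ∉ x.sched τ) :
    x.state (τ + 1) v = x.state τ v := by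
  rcases x.step τ with ⟨w, -, hint⟩ | ⟨w, -, htok⟩
  · exact hint.2 v h
  · exact htok.2.2.2.2.2.2.2 v h

theorem delta_of_mem {v : Fin n} {τ : ℕ} (h : v ∈ x.sched τ) :
    P.delta (x.state τ v) (x.inp τ v) (x.state (τ + 1) v) := by
  rcases x.step τ with ⟨w, -, hint⟩ | ⟨w, -, htok⟩
  · exact (hint.1 v h).2.2
  · exact htok.2.2.2.2.2.2.1 v h

theorem state_eq_of_forall_not_mem {v : Fin n} {s τ : ℕ} (hsτ : s ≤ τ)
    (h : ∀ t, s ≤ t → t < τ → v ∉ x.sched t) : x.state τ v = x.state s v := by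
  induction τ, hsτ using Nat.le_induction with
  | base => rfl
  | succ τ hsτ ih =>
    rw [x.state_succ_of_not_mem (h τ hsτ τ.lt_succ_self),
      ih fun t h1 h2 => h t h1 (Nat.lt_succ_of_lt h2)]

theorem state_nextMove {v : Fin n} {s : ℕ} (h : ∃ τ, s ≤ τ ∧ v ∈ x.sched τ) :
    x.state (x.nextMove v s) v = x.state s v :=
  x.state_eq_of_forall_not_mem (x.nextMove_spec h).1 (x.nextMove_spec h).2.2

theorem delta_nextMove {v : Fin n} {s : ℕ} (h : ∃ τ, s ≤ τ ∧ v ∈ x.sched τ) :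
    P.delta (x.state s v) (x.inp (x.nextMove v s) v) (x.state (x.nextMove v s + 1) v) := by
  rw [← x.state_nextMove h]
  exact x.delta_of_mem (x.nextMove_spec h).2.1

theorem sends_nextMove_iff {v : Fin n} {s : ℕ} (h : ∃ τ, s ≤ τ ∧ v ∈ x.sched τ) :
    x.Sends snd v (x.nextMove v s) ↔ P.lam (x.state s v) snd := by
  rw [Sends, x.state_nextMove h, and_iff_right (x.nextMove_spec h).2.1]

theorem receives_nextMove_iff {v : Fin n} {s : ℕ} (h : ∃ τ, s ≤ τ ∧ v ∈ x.sched τ) :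
    x.Receives rcv v (x.nextMove v s) ↔ x.inp (x.nextMove v s) v rcv := by
  rw [Receives, and_iff_right (x.nextMove_spec h).2.1]

theorem tok_succ_iff (hP : P.IsTemplate snd rcv) (v : Fin n) (τ : ℕ) :
    P.tok (x.state (τ + 1) v) ↔
      x.Receives rcv v τ ∨ (P.tok (x.state τ v) ∧ ¬ x.Sends snd v τ) := by
  by_cases hv : v ∈ x.sched τ
  · have hδ := x.delta_of_mem hv
    simp only [Sends, Receives, hv, true_and]
    by_cases hs : P.lam (x.state τ v) snd
    · have hr := hP.not_rcv_of_tok hδ (hP.tok_of_snd hs)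
      simp only [hs, hr, hP.not_tok_of_snd hδ hs, not_true, and_false, or_false]
    by_cases hr : x.inp τ v rcv
    · simp only [hr, hP.tok_of_rcv hδ hr, true_or]
    · simp only [hs, hr, hP.tok_iff_of_internal hδ hs hr, not_false_eq_true, and_true, false_or]
  · simp [Sends, Receives, hv, x.state_succ_of_not_mem hv]

theorem tok_nextMove_succ_iff (hP : P.IsTemplate snd rcv) {v : Fin n} {s : ℕ}
    (h : ∃ τ, s ≤ τ ∧ v ∈ x.sched τ) :
    P.tok (x.state (x.nextMove v s + 1) v) ↔ x.Receives rcv v (x.nextMove v s) ∨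
      (P.tok (x.state s v) ∧ ¬ x.Sends snd v (x.nextMove v s)) := by
  rw [x.tok_succ_iff hP, x.state_nextMove h]

theorem tokenMove_nextMove (hP : P.IsTemplate snd rcv) {v : Fin n} {s : ℕ}
    (h : ∃ τ, s ≤ τ ∧ v ∈ x.sched τ) (htm : x.TokenMove snd rcv v (x.nextMove v s)) :
    (x.Sends snd v (x.nextMove v s) ↔ P.tok (x.state s v)) ∧
      (x.Receives rcv v (x.nextMove v s) ↔ ¬ P.tok (x.state s v)) ∧
      (P.tok (x.state (x.nextMove v s + 1) v) ↔ ¬ P.tok (x.state s v)) := by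
  have hδ := x.delta_nextMove h
  rw [TokenMove, x.sends_nextMove_iff h, x.receives_nextMove_iff h] at htm
  have hs := hP.snd_iff_tok hδ htm
  have hr := hP.rcv_iff_not_tok hδ htm
  rw [x.tok_nextMove_succ_iff hP h, x.sends_nextMove_iff h, x.receives_nextMove_iff h, hs, hr]
  exact ⟨Iff.rfl, Iff.rfl, by tauto⟩

theorem not_tokenMove_nextMove (hP : P.IsTemplate snd rcv) {v : Fin n} {s : ℕ}
    (h : ∃ τ, s ≤ τ ∧ v ∈ x.sched τ) (htm : ¬ x.TokenMove snd rcv v (x.nextMove v s)) :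
    ¬ P.lam (x.state s v) snd ∧ ¬ x.inp (x.nextMove v s) v rcv ∧
      (P.tok (x.state (x.nextMove v s + 1) v) ↔ P.tok (x.state s v)) ∧
      Nat.count (x.Sends snd v) (x.nextMove v s + 1) = Nat.count (x.Sends snd v) s ∧
      Nat.count (x.Receives rcv v) (x.nextMove v s + 1) = Nat.count (x.Receives rcv v) s := by
  rw [TokenMove, not_or] at htm
  refine ⟨fun hs => htm.1 ((x.sends_nextMove_iff h).2 hs),
    fun hr => htm.2 ((x.receives_nextMove_iff h).2 hr), ?_, ?_, ?_⟩
  · rw [x.tok_nextMove_succ_iff hP h]; tauto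
  · simp [x.count_nextMove_succ h (p := x.Sends snd v) fun _ => And.left, htm.1]
  · simp [x.count_nextMove_succ h (p := x.Receives rcv v) fun _ => And.left, htm.2]

theorem sends_receives_cases (τ : ℕ) :
    (∀ v, ¬ x.Sends snd v τ ∧ ¬ x.Receives rcv v τ) ∨
      ∃ w, (∀ v, x.Sends snd v τ ↔ v = w) ∧
        (∀ v, x.Receives rcv v τ ↔ v = ringSucc w) := by
  rcases x.step τ with ⟨w, -, hint⟩ | ⟨w, -, htk⟩
  · exact Or.inl fun v => ⟨fun h => (hint.1 v h.1).1 h.2, fun h => (hint.1 v h.1).2.1 h.2⟩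
  · obtain ⟨hw, hw', hs, hs', hr, hr', -⟩ := htk
    refine Or.inr ⟨w, fun v => ⟨fun h => ?_, ?_⟩, fun v => ⟨fun h => ?_, ?_⟩⟩
    · exact by_contra fun hne => hs' v h.1 hne h.2
    · rintro rfl; exact ⟨hw, hs⟩
    · exact by_contra fun hne => hr' v h.1 hne h.2
    · rintro rfl; exact ⟨hw', hr⟩

/-! ### Counting token passes -/

section tokenPosition

variable {p : Fin n}

theorem tok_iff_eq_iterate (hP : P.IsTemplate snd rcv) (hp : ∀ v, P.tok (x.state 0 v) ↔ v = p)
    (τ : ℕ) (v : Fin n) :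
    P.tok (x.state τ v) ↔ v = ringSucc^[x.passCount snd τ] p := by
  induction τ generalizing v with
  | zero => simpa [passCount] using hp v
  | succ τ ih =>
    rw [x.tok_succ_iff hP, ih]
    rcases x.sends_receives_cases τ with h | ⟨w, hs, hr⟩
    · have hpc : x.passCount snd (τ + 1) = x.passCount snd τ := by
        simp [passCount, Nat.count_succ, fun w => (h w).1]
      simp [h v, hpc]
    · have hw : w = ringSucc^[x.passCount snd τ] p := (ih w).1 (hP.tok_of_snd ((hs w).2 rfl).2)
      have hpc : x.passCount snd (τ + 1) = x.passCount snd τ + 1 := by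
        rw [passCount, Nat.count_succ, if_pos ⟨w, (hs w).2 rfl⟩]; rfl
      rw [hr v, hs v, hpc, Function.iterate_succ_apply', ← hw]
      exact ⟨fun h => h.resolve_right fun h' => h'.2 h'.1, Or.inl⟩

theorem sends_iff (hP : P.IsTemplate snd rcv) (hp : ∀ v, P.tok (x.state 0 v) ↔ v = p)
    (v : Fin n) (τ : ℕ) :
    x.Sends snd v τ ↔ (∃ w, x.Sends snd w τ) ∧ ringSucc^[x.passCount snd τ] p = v := by
  refine ⟨fun h => ⟨⟨v, h⟩, ?_⟩, ?_⟩
  · exact ((x.tok_iff_eq_iterate hP hp τ v).1 (hP.tok_of_snd h.2)).symm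
  · rintro ⟨⟨w, hw⟩, rfl⟩
    rwa [← (x.tok_iff_eq_iterate hP hp τ w).1 (hP.tok_of_snd hw.2)]

theorem receives_iff (hP : P.IsTemplate snd rcv) (hp : ∀ v, P.tok (x.state 0 v) ↔ v = p)
    (v : Fin n) (τ : ℕ) :
    x.Receives rcv v τ ↔
      (∃ w, x.Sends snd w τ) ∧ ringSucc^[x.passCount snd τ + 1] p = v := by
  rcases x.sends_receives_cases τ with h | ⟨w, hs, hr⟩
  · simp [h]
  · have hw := ((x.sends_iff hP hp w τ).1 ((hs w).2 rfl)).2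
    rw [hr v, Function.iterate_succ_apply', hw]
    exact ⟨fun h => ⟨⟨w, (hs w).2 rfl⟩, h.symm⟩, fun h => h.2.symm⟩

theorem count_sends (hP : P.IsTemplate snd rcv) (hp : ∀ v, P.tok (x.state 0 v) ↔ v = p)
    (v : Fin n) (τ : ℕ) : Nat.count (x.Sends snd v) τ =
      Nat.count (· ≡ v.val + n - p.val [MOD n]) (x.passCount snd τ) := by
  calc Nat.count (x.Sends snd v) τ
      = Nat.count (fun t => (∃ w, x.Sends snd w t) ∧
          ringSucc^[Nat.count (fun t => ∃ w, x.Sends snd w t) t] p = v) τ := by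
        congr 1; funext t; exact propext (x.sends_iff hP hp v t)
    _ = _ := (Nat.count_and_comp_count _ (fun i => ringSucc^[i] p = v) τ).trans <| by
        congr 1; funext i; exact propext (ringSucc_iterate_eq_iff p v i)

theorem count_receives (hP : P.IsTemplate snd rcv) (hp : ∀ v, P.tok (x.state 0 v) ↔ v = p)
    (v : Fin n) (τ : ℕ) : Nat.count (x.Receives rcv v) τ =
      Nat.count (· ≡ v.val + n - (ringSucc p).val [MOD n]) (x.passCount snd τ) := by
  calc Nat.count (x.Receives rcv v) τ
      = Nat.count (fun t => (∃ w, x.Sends snd w t) ∧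
          ringSucc^[Nat.count (fun t => ∃ w, x.Sends snd w t) t] (ringSucc p) = v) τ := by
        congr 1; funext t
        rw [x.receives_iff hP hp v t, ← Function.iterate_succ_apply]; rfl
    _ = _ := (Nat.count_and_comp_count _ (fun i => ringSucc^[i] (ringSucc p) = v) τ).trans <| by
        congr 1; funext i; exact propext (ringSucc_iterate_eq_iff _ v i)

-- The initial holder `p` sends at the passes `≡ 0` and receives at the passes `≡ n - 1`
-- (mod `n`): the most and the least frequent residues among the first `N` passes.
theorem count_receives_le_count_sends_holder (hP : P.IsTemplate snd rcv)
    (hp : ∀ v, P.tok (x.state 0 v) ↔ v = p) (w : Fin n) (τ : ℕ) :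
    Nat.count (x.Receives rcv w) τ ≤ Nat.count (x.Sends snd p) τ := by
  rw [x.count_receives hP hp, x.count_sends hP hp]
  exact Nat.count_modEq_le_count_modEq p.pos (by simp) _

theorem count_receives_holder_le_count_sends (hP : P.IsTemplate snd rcv)
    (hp : ∀ v, P.tok (x.state 0 v) ↔ v = p) (w : Fin n) (τ : ℕ) :
    Nat.count (x.Receives rcv p) τ ≤ Nat.count (x.Sends snd w) τ := by
  rw [x.count_receives hP hp, x.count_sends hP hp]
  refine Nat.count_modEq_le_count_modEq p.pos ?_ _
  have hlast : (p.val + n - (ringSucc p).val) % n = n - 1 := by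
    have hp' := p.isLt
    simp only [ringSucc]
    rcases Nat.lt_or_ge (p.val + 1) n with h | h
    · rw [Nat.mod_eq_of_lt h, show p.val + n - (p.val + 1) = n - 1 by omega]
      exact Nat.mod_eq_of_lt (by omega)
    · rw [show p.val + 1 = n by omega, Nat.mod_self, show p.val + n - 0 = (n - 1) + n by omega,
        Nat.add_mod_right]
      exact Nat.mod_eq_of_lt (by omega)
  have hw := Nat.mod_lt (w.val + n - p.val) p.pos
  omega

end tokenPosition

end interleaving

end SysRun

namespace RawProc

variable {Q O I : Type} {P : RawProc Q O I} {snd : O} {rcv : I} {n : ℕ}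
  {s s' : Fin n → Q} {inp : Fin n → I → Prop}

theorem interleavingStep_singleton (v : Fin n) (hs : ¬ P.lam (s v) snd) (hr : ¬ inp v rcv)
    (hδ : P.delta (s v) (inp v) (s' v)) (hframe : ∀ w, w ≠ v → s' w = s w) :
    P.interleavingStep snd rcv {v} s inp s' :=
  Or.inl ⟨v, rfl, fun w hw => by rw [Set.mem_singleton_iff.1 hw]; exact ⟨hs, hr, hδ⟩,
    fun w hw => hframe w hw⟩

theorem interleavingStep_pair (v : Fin n) (hs : P.lam (s v) snd) (hr : ¬ inp v rcv)
    (hs' : ¬ P.lam (s (ringSucc v)) snd) (hr' : inp (ringSucc v) rcv)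
    (hδ : ∀ w ∈ ({v, ringSucc v} : Set (Fin n)), P.delta (s w) (inp w) (s' w))
    (hframe : ∀ w ∉ ({v, ringSucc v} : Set (Fin n)), s' w = s w) :
    P.interleavingStep snd rcv {v, ringSucc v} s inp s' := by
  refine Or.inr ⟨v, rfl, Set.mem_insert _ _, Set.mem_insert_of_mem _ rfl, hs, ?_, hr', ?_, hδ,
    hframe⟩
  · rintro w (rfl | rfl) hne
    · exact absurd rfl hne
    · exact hs'
  · rintro w (rfl | rfl) hne
    · exact hr
    · exact absurd rfl hne

theorem pair_ringSucc_eq_univ (v : Fin 2) : ({v, ringSucc v} : Set (Fin 2)) = Set.univ := by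
  ext w; fin_cases v <;> fin_cases w <;> simp [ringSucc]

theorem interleavingStep_two_pass (hP : P.IsTemplate snd rcv) {s s' : Fin 2 → Q}
    {inp : Fin 2 → I → Prop} (hδ : ∀ v, P.delta (s v) (inp v) (s' v))
    (htok : P.tok (s 0) ↔ ¬ P.tok (s 1)) (hmove : ∀ v, P.lam (s v) snd ∨ inp v rcv) :
    P.interleavingStep snd rcv Set.univ s inp s' := by
  have pass_from : ∀ v : Fin 2, P.tok (s v) → ¬ P.tok (s (ringSucc v)) →
      P.interleavingStep snd rcv Set.univ s inp s' := fun v h h' => by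
    rw [← pair_ringSucc_eq_univ v]
    exact interleavingStep_pair v ((hP.snd_iff_tok (hδ v) (hmove v)).2 h)
      (hP.not_rcv_of_tok (hδ v) h) (fun hs => h' (hP.tok_of_snd hs))
      ((hP.rcv_iff_not_tok (hδ _) (hmove _)).2 h') (fun w _ => hδ w)
      (fun w hw => absurd (pair_ringSucc_eq_univ v ▸ Set.mem_univ w) hw)
  by_cases h0 : P.tok (s 0)
  · exact pass_from 0 h0 (htok.1 h0)
  · exact pass_from 1 (not_not.1 (mt htok.2 h0)) h0

end RawProc

namespace SysRun

variable {Q O I : Type} {P : RawProc Q O I} {isGlob isGlob' : I → Prop} {n m : ℕ}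
  {R : StepRel Q I n} {R' : StepRel Q I m}

/-! ### Replaying a local run -/

structure Tracks (y : SysRun P isGlob' m R') (i : Fin m) (x : SysRun P isGlob n R) (a : Fin n)
    (σ : ℕ → ℕ) : Prop where
  zero : σ 0 = 0
  stay : ∀ k, i ∉ y.sched k → σ (k + 1) = σ k
  move : ∀ k, i ∈ y.sched k → (∃ τ, σ k ≤ τ ∧ a ∈ x.sched τ) ∧
    σ (k + 1) = x.nextMove a (σ k) + 1 ∧ y.state k i = x.state (x.nextMove a (σ k)) a ∧
    y.inp k i = x.inp (x.nextMove a (σ k)) a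

namespace Tracks

variable {y : SysRun P isGlob' m R'} {i : Fin m} {x : SysRun P isGlob n R} {a : Fin n}
  {σ : ℕ → ℕ}

theorem count_eq (h : y.Tracks i x a σ) (k : ℕ) :
    Nat.count (fun τ => a ∈ x.sched τ) (σ k) = Nat.count (fun k => i ∈ y.sched k) k := by
  induction k with
  | zero => rw [h.zero, Nat.count_zero, Nat.count_zero]
  | succ k ih =>
    by_cases hk : i ∈ y.sched k
    · obtain ⟨hex, hσ, -⟩ := h.move k hk
      rw [hσ, x.count_nextMove_succ hex fun _ => id, if_pos (x.nextMove_spec hex).2.1, ih,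
        Nat.count_succ, if_pos hk]
    · rw [h.stay k hk, ih, Nat.count_succ, if_neg hk, Nat.add_zero]

theorem localIdx_spec (h : y.Tracks i x a σ) (hi : y.MovesInf i) (t : ℕ) :
    a ∈ x.sched (x.localIdx a t) ∧ t ≤ x.localIdx a t ∧
      x.localIdx a t = x.nextMove a (σ (y.localIdx i t)) := by
  set k := y.localIdx i t
  have hk : i ∈ y.sched k := Nat.nth_mem_of_infinite hi t
  obtain ⟨hex, -⟩ := h.move k hk
  obtain ⟨hs, hτ, hgap⟩ := x.nextMove_spec hex
  have hcount : Nat.count (fun τ => a ∈ x.sched τ) (x.nextMove a (σ k)) = t := by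
    rw [Nat.count_eq_of_forall_not hs hgap, h.count_eq]
    exact Nat.count_nth_of_infinite hi t
  have hnth : x.localIdx a t = x.nextMove a (σ k) := by
    rw [localIdx, ← hcount, Nat.nth_count hτ]
  exact ⟨hnth ▸ hτ, hnth ▸ hcount ▸ Nat.count_le _, hnth⟩

theorem movesInf (h : y.Tracks i x a σ) (hi : y.MovesInf i) : x.MovesInf a :=
  Set.infinite_of_forall_exists_gt fun t =>
    ⟨x.localIdx a (t + 1), (h.localIdx_spec hi (t + 1)).1, (h.localIdx_spec hi (t + 1)).2.1⟩

theorem localWord_eq (h : y.Tracks i x a σ) (hi : y.MovesInf i) :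
    y.localWord i = x.localWord a := by
  funext t
  obtain ⟨-, -, hidx⟩ := h.localIdx_spec hi t
  obtain ⟨-, -, hst, hin⟩ := h.move (y.localIdx i t) (Nat.nth_mem_of_infinite hi t)
  simp only [localWord, hidx, hst, hin]

end Tracks

end SysRun

/-! ### Merging two local runs into a run of the 2-ring -/

-- `s` and `u` are the positions of the big run up to which the local runs of `a` and `b` have
-- been replayed; `alive` becomes `false` once process `1` has taken the token synthetically.
structure MergeCursor where
  s : ℕ
  u : ℕ
  alive : Bool

inductive MergeMove
  | internal0
  | internal1
  | pass
  | abandon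

def MergeMove.sched : MergeMove → Set (Fin 2)
  | .internal0 => {0}
  | .internal1 => {1}
  | .pass => Set.univ
  | .abandon => Set.univ

theorem MergeMove.zero_mem_sched_iff (mv : MergeMove) :
    (0 : Fin 2) ∈ mv.sched ↔ mv ≠ .internal1 := by
  cases mv <;> simp [MergeMove.sched]

theorem MergeMove.one_mem_sched_iff (mv : MergeMove) :
    (1 : Fin 2) ∈ mv.sched ↔ mv ≠ .internal0 := by
  cases mv <;> simp [MergeMove.sched]

namespace SysRun

variable {Q O I : Type} {P : RawProc Q O I} {snd : O} {rcv : I} {isGlob : I → Prop} {n : ℕ}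
  (x : SysRun P isGlob n (P.interleavingStep snd rcv)) (a b : Fin n)

structure Interlocked : Prop where
  tok_zero : P.tok (x.state 0 a) ↔ ¬ P.tok (x.state 0 b)
  receives_le_sends : ∀ τ, Nat.count (x.Receives rcv a) τ ≤ Nat.count (x.Sends snd b) τ

noncomputable def mergeMove (m : MergeCursor) : MergeMove :=
  if m.alive ∧ x.TokenMove snd rcv a (x.nextMove a m.s) then
    if ∃ τ, m.u ≤ τ ∧ x.TokenMove snd rcv b τ then
      if x.TokenMove snd rcv b (x.nextMove b m.u) then .pass else .internal1
    else .abandon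
  else .internal0

noncomputable def mergeStep (m : MergeCursor) : MergeCursor :=
  match x.mergeMove a b m with
  | .internal0 => ⟨x.nextMove a m.s + 1, m.u, m.alive⟩
  | .internal1 => ⟨m.s, x.nextMove b m.u + 1, m.alive⟩
  | .pass => ⟨x.nextMove a m.s + 1, x.nextMove b m.u + 1, m.alive⟩
  | .abandon => ⟨x.nextMove a m.s + 1, m.u, false⟩

noncomputable def mergeCursor : ℕ → MergeCursor
  | 0 => ⟨0, 0, true⟩
  | k + 1 => x.mergeStep a b (mergeCursor k)

@[simp]
theorem mergeCursor_zero : x.mergeCursor a b 0 = ⟨0, 0, true⟩ := rfl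

@[simp]
theorem mergeCursor_succ (k : ℕ) :
    x.mergeCursor a b (k + 1) = x.mergeStep a b (x.mergeCursor a b k) := rfl

noncomputable def mergeState (m : MergeCursor) : Fin 2 → Q :=
  ![x.state m.s a, if m.alive then x.state m.u b else P.receiveSucc rcv (x.state m.u b)]

noncomputable def mergeInp (m : MergeCursor) : Fin 2 → I → Prop :=
  ![x.inp (x.nextMove a m.s) a,
    if x.mergeMove a b m = .abandon then (· = rcv) else x.inp (x.nextMove b m.u) b]

def MergeInv (m : MergeCursor) : Prop :=
  (m.alive → (P.tok (x.state m.s a) ↔ ¬ P.tok (x.state m.u b)) ∧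
      Nat.count (x.Receives rcv a) m.s = Nat.count (x.Sends snd b) m.u) ∧
    (m.alive = false → ¬ P.tok (x.state m.s a) ∧ ∀ τ, m.s ≤ τ → ¬ x.Receives rcv a τ)

variable {x a b} {m : MergeCursor}

theorem mergeMove_eq_internal0 (h : x.mergeMove a b m = .internal0) :
    ¬ (m.alive ∧ x.TokenMove snd rcv a (x.nextMove a m.s)) := by
  unfold mergeMove at h
  split_ifs at h with h1
  exact h1

theorem mergeMove_eq_internal1 (h : x.mergeMove a b m = .internal1) :
    m.alive ∧ (∃ τ, m.u ≤ τ ∧ x.TokenMove snd rcv b τ) ∧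
      ¬ x.TokenMove snd rcv b (x.nextMove b m.u) := by
  unfold mergeMove at h
  split_ifs at h with h1 h2 h3
  exact ⟨h1.1, h2, h3⟩

theorem mergeMove_eq_pass (h : x.mergeMove a b m = .pass) :
    m.alive ∧ x.TokenMove snd rcv a (x.nextMove a m.s) ∧
      (∃ τ, m.u ≤ τ ∧ x.TokenMove snd rcv b τ) ∧
      x.TokenMove snd rcv b (x.nextMove b m.u) := by
  unfold mergeMove at h
  split_ifs at h with h1 h2 h3
  exact ⟨h1.1, h1.2, h2, h3⟩

theorem mergeMove_eq_abandon (h : x.mergeMove a b m = .abandon) :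
    m.alive ∧ x.TokenMove snd rcv a (x.nextMove a m.s) ∧
      ¬ ∃ τ, m.u ≤ τ ∧ x.TokenMove snd rcv b τ := by
  unfold mergeMove at h
  split_ifs at h with h1 h2
  exact ⟨h1.1, h1.2, h2⟩

theorem MergeInv.exists_sends (hab : x.Interlocked a b) (hm : x.MergeInv a b m) (hal : m.alive)
    {τ : ℕ} (hτ : m.s ≤ τ) (hr : x.Receives rcv a τ) :
    ∃ τ', m.u ≤ τ' ∧ x.Sends snd b τ' := by
  have h1 : Nat.count (x.Receives rcv a) m.s < Nat.count (x.Receives rcv a) (τ + 1) :=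
    (Nat.count_monotone _ hτ).trans_lt (Nat.count_lt_count_succ_iff.2 hr)
  rw [(hm.1 hal).2] at h1
  obtain ⟨τ', hτ', hs⟩ := Nat.exists_of_count_lt_count (h1.trans_le (hab.receives_le_sends _))
  exact ⟨τ', hτ'.1, hs⟩

theorem mergeStep_internal0 (hP : P.IsTemplate snd rcv) (ha : x.MovesInf a)
    (hm : x.MergeInv a b m) (h : x.mergeMove a b m = .internal0) :
    x.MergeInv a b (x.mergeStep a b m) ∧
      P.interleavingStep snd rcv {0} (x.mergeState a b m) (x.mergeInp a b m)
        (x.mergeState a b (x.mergeStep a b m)) := by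
  have hex := ha.exists_ge m.s
  have htm : ¬ x.TokenMove snd rcv a (x.nextMove a m.s) := by
    by_cases hal : m.alive
    · exact fun htm => mergeMove_eq_internal0 h ⟨hal, htm⟩
    · obtain ⟨hntok, hnrcv⟩ := hm.2 (by simpa using hal)
      rintro (hs | hr)
      · exact hntok (hP.tok_of_snd ((x.sends_nextMove_iff hex).1 hs))
      · exact hnrcv _ (x.nextMove_spec hex).1 hr
  obtain ⟨hs, hr, htok, -, hcr⟩ := x.not_tokenMove_nextMove hP hex htm
  have hstep : x.mergeStep a b m = ⟨x.nextMove a m.s + 1, m.u, m.alive⟩ := by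
    simp only [mergeStep, h]
  rw [hstep]
  refine ⟨⟨fun hal => ?_, fun hal => ?_⟩, ?_⟩
  · obtain ⟨h1, h2⟩ := hm.1 hal
    exact ⟨htok.trans h1, hcr.trans h2⟩
  · obtain ⟨h1, h2⟩ := hm.2 hal
    exact ⟨htok.not.2 h1,
      fun τ hτ => h2 τ ((x.nextMove_spec hex).1.trans (Nat.le_of_succ_le hτ))⟩
  · refine RawProc.interleavingStep_singleton 0 (by simpa [mergeState] using hs)
      (by simpa [mergeInp] using hr)
      (by simpa [mergeState, mergeInp] using x.delta_nextMove hex) ?_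
    intro w hw
    fin_cases w
    · exact absurd rfl hw
    · simp [mergeState]

theorem mergeStep_internal1 (hP : P.IsTemplate snd rcv) (hm : x.MergeInv a b m)
    (h : x.mergeMove a b m = .internal1) :
    x.MergeInv a b (x.mergeStep a b m) ∧
      P.interleavingStep snd rcv {1} (x.mergeState a b m) (x.mergeInp a b m)
        (x.mergeState a b (x.mergeStep a b m)) := by
  obtain ⟨hal, ⟨W, hW, hWtm⟩, htm⟩ := mergeMove_eq_internal1 h
  have hex : ∃ τ, m.u ≤ τ ∧ b ∈ x.sched τ := ⟨W, hW, hWtm.elim And.left And.left⟩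
  obtain ⟨hs, hr, htok, hcs, -⟩ := x.not_tokenMove_nextMove hP hex htm
  have hstep : x.mergeStep a b m = ⟨m.s, x.nextMove b m.u + 1, m.alive⟩ := by
    simp only [mergeStep, h]
  rw [hstep]
  refine ⟨⟨fun _ => ?_, fun hal' => absurd hal (by simpa using hal')⟩, ?_⟩
  · obtain ⟨h1, h2⟩ := hm.1 hal
    exact ⟨h1.trans (not_congr htok.symm), h2.trans hcs.symm⟩
  · refine RawProc.interleavingStep_singleton 1 (by simpa [mergeState, hal] using hs)
      (by simpa [mergeInp, h] using hr)
      (by simpa [mergeState, mergeInp, hal, h] using x.delta_nextMove hex) ?_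
    intro w hw
    fin_cases w
    · simp [mergeState]
    · exact absurd rfl hw

theorem mergeStep_pass (hP : P.IsTemplate snd rcv) (ha : x.MovesInf a) (hm : x.MergeInv a b m)
    (h : x.mergeMove a b m = .pass) :
    x.MergeInv a b (x.mergeStep a b m) ∧
      P.interleavingStep snd rcv Set.univ (x.mergeState a b m) (x.mergeInp a b m)
        (x.mergeState a b (x.mergeStep a b m)) := by
  obtain ⟨hal, htma, ⟨W, hW, hWtm⟩, htmb⟩ := mergeMove_eq_pass h
  have hexa := ha.exists_ge m.s
  have hexb : ∃ τ, m.u ≤ τ ∧ b ∈ x.sched τ := ⟨W, hW, hWtm.elim And.left And.left⟩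
  obtain ⟨-, hra, htoka⟩ := x.tokenMove_nextMove hP hexa htma
  obtain ⟨hsb, -, htokb⟩ := x.tokenMove_nextMove hP hexb htmb
  obtain ⟨h1, h2⟩ := hm.1 hal
  have hstep : x.mergeStep a b m = ⟨x.nextMove a m.s + 1, x.nextMove b m.u + 1, m.alive⟩ := by
    simp only [mergeStep, h]
  rw [hstep]
  refine ⟨⟨fun _ => ⟨?_, ?_⟩, fun hal' => absurd hal (by simpa using hal')⟩, ?_⟩
  · rw [htoka, htokb]; tauto
  · dsimp only
    rw [x.count_nextMove_succ hexa (p := x.Receives rcv a) fun _ => And.left,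
      x.count_nextMove_succ hexb (p := x.Sends snd b) fun _ => And.left, h2]
    by_cases hb : P.tok (x.state m.u b) <;> simp [hra, hsb, h1, hb]
  · refine RawProc.interleavingStep_two_pass hP (fun v => ?_) (by simpa [mergeState, hal] using h1)
      (fun v => ?_)
    · fin_cases v
      · simpa [mergeState, mergeInp] using x.delta_nextMove hexa
      · simpa [mergeState, mergeInp, hal, h] using x.delta_nextMove hexb
    · fin_cases v
      · simpa [mergeState, mergeInp, TokenMove, x.sends_nextMove_iff hexa,
          x.receives_nextMove_iff hexa] using htma
      · simpa [mergeState, mergeInp, hal, h, TokenMove, x.sends_nextMove_iff hexb,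
          x.receives_nextMove_iff hexb] using htmb

theorem mergeStep_abandon (hP : P.IsTemplate snd rcv) (ha : x.MovesInf a)
    (hab : x.Interlocked a b) (hm : x.MergeInv a b m) (h : x.mergeMove a b m = .abandon) :
    x.MergeInv a b (x.mergeStep a b m) ∧
      P.interleavingStep snd rcv Set.univ (x.mergeState a b m) (x.mergeInp a b m)
        (x.mergeState a b (x.mergeStep a b m)) := by
  obtain ⟨hal, htma, hnob⟩ := mergeMove_eq_abandon h
  have hexa := ha.exists_ge m.s
  have hno_rcv : ∀ τ, m.s ≤ τ → ¬ x.Receives rcv a τ := fun τ hτ hr =>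
    let ⟨τ', hτ', hs⟩ := hm.exists_sends hab hal hτ hr
    hnob ⟨τ', hτ', Or.inl hs⟩
  obtain ⟨-, hra, htoka⟩ := x.tokenMove_nextMove hP hexa htma
  have htok : P.tok (x.state m.s a) :=
    not_not.1 fun hnt => hno_rcv _ (x.nextMove_spec hexa).1 (hra.2 hnt)
  have htokb : ¬ P.tok (x.state m.u b) := ((hm.1 hal).1).1 htok
  have hstep : x.mergeStep a b m = ⟨x.nextMove a m.s + 1, m.u, false⟩ := by
    simp only [mergeStep, h]
  rw [hstep]
  refine ⟨⟨fun hal' => absurd hal' (by simp), fun _ => ⟨fun ht => htoka.1 ht htok,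
    fun τ hτ => hno_rcv τ ((x.nextMove_spec hexa).1.trans (Nat.le_of_succ_le hτ))⟩⟩, ?_⟩
  refine RawProc.interleavingStep_two_pass hP (fun v => ?_)
    (by simpa [mergeState, hal] using (hm.1 hal).1) (fun v => ?_)
  · fin_cases v
    · simpa [mergeState, mergeInp] using x.delta_nextMove hexa
    · simpa [mergeState, mergeInp, hal, h] using hP.delta_receiveSucc htokb
  · fin_cases v
    · simpa [mergeState, mergeInp, TokenMove, x.sends_nextMove_iff hexa,
        x.receives_nextMove_iff hexa] using htma
    · simp [mergeInp, h]

theorem mergeStep_spec (hP : P.IsTemplate snd rcv) (ha : x.MovesInf a)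
    (hab : x.Interlocked a b) (hm : x.MergeInv a b m) :
    x.MergeInv a b (x.mergeStep a b m) ∧
      P.interleavingStep snd rcv (x.mergeMove a b m).sched (x.mergeState a b m)
        (x.mergeInp a b m) (x.mergeState a b (x.mergeStep a b m)) := by
  cases h : x.mergeMove a b m
  · exact mergeStep_internal0 hP ha hm h
  · exact mergeStep_internal1 hP hm h
  · exact mergeStep_pass hP ha hm h
  · exact mergeStep_abandon hP ha hab hm h

theorem mergeInv_mergeCursor (hP : P.IsTemplate snd rcv) (ha : x.MovesInf a)
    (hab : x.Interlocked a b) (k : ℕ) : x.MergeInv a b (x.mergeCursor a b k) := by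
  induction k with
  | zero => simpa [MergeInv] using hab.tok_zero
  | succ k ih => exact (mergeStep_spec hP ha hab ih).1

noncomputable def mergeRun (hP : P.IsTemplate snd rcv) (ha : x.MovesInf a)
    (hab : x.Interlocked a b) : SysRun P (fun _ => False) 2 (P.interleavingStep snd rcv) where
  state k := x.mergeState a b (x.mergeCursor a b k)
  inp k := x.mergeInp a b (x.mergeCursor a b k)
  sched k := (x.mergeMove a b (x.mergeCursor a b k)).sched
  init_state v := by
    fin_cases v
    · simpa [mergeState] using x.init_state a
    · simpa [mergeState] using x.init_state b
  init_token := by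
    by_cases h : P.tok (x.state 0 a)
    · refine ⟨0, by simpa [mergeState] using h, fun v hv => ?_⟩
      fin_cases v
      · rfl
      · exact absurd (by simpa [mergeState] using hv) (hab.tok_zero.1 h)
    · refine ⟨1, by simpa [mergeState] using mt hab.tok_zero.2 h, fun v hv => ?_⟩
      fin_cases v
      · exact absurd (by simpa [mergeState] using hv) h
      · rfl
  glob_consistent _ _ _ _ h := h.elim
  step k := (mergeStep_spec hP ha hab (mergeInv_mergeCursor hP ha hab k)).2

theorem mergeRun_movesInf_zero (hP : P.IsTemplate snd rcv) (ha : x.MovesInf a)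
    (hab : x.Interlocked a b) : (mergeRun hP ha hab).MovesInf 0 := by
  refine Set.infinite_of_forall_exists_gt fun K => by_contra fun hK => ?_
  have hint : ∀ k, K < k → x.mergeMove a b (x.mergeCursor a b k) = .internal1 := fun k hk =>
    not_not.1 fun hne => hK ⟨k, (MergeMove.zero_mem_sched_iff _).2 hne, hk⟩
  obtain ⟨-, ⟨W, hW, hWtm⟩, -⟩ := mergeMove_eq_internal1 (hint (K + 1) K.lt_succ_self)
  -- each `internal1` step advances `u` strictly, but never past the pending token move `W` of `b`
  have hbound : ∀ t, (x.mergeCursor a b (K + 1)).u + t ≤ (x.mergeCursor a b (K + 1 + t)).u ∧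
      (x.mergeCursor a b (K + 1 + t)).u ≤ W := by
    intro t
    induction t with
    | zero => exact ⟨le_rfl, hW⟩
    | succ t ih =>
      have h1 := hint (K + 1 + t) (by omega)
      obtain ⟨-, -, htm⟩ := mergeMove_eq_internal1 h1
      have hWmem : b ∈ x.sched W := hWtm.elim And.left And.left
      have hle : x.nextMove b (x.mergeCursor a b (K + 1 + t)).u ≤ W :=
        Nat.sInf_le ⟨ih.2, hWmem⟩
      have hne : x.nextMove b (x.mergeCursor a b (K + 1 + t)).u ≠ W := fun he => htm (he ▸ hWtm)
      have hs := (x.nextMove_spec ⟨W, ih.2, hWmem⟩).1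
      have hu : (x.mergeCursor a b (K + 1 + t + 1)).u =
          x.nextMove b (x.mergeCursor a b (K + 1 + t)).u + 1 := by
        simp only [mergeCursor_succ x a b (K + 1 + t), mergeStep, h1]
      rw [show K + 1 + (t + 1) = K + 1 + t + 1 by omega, hu]
      omega
  have := hbound (W + 1)
  omega

theorem alive_of_mergeRun_movesInf_one (hP : P.IsTemplate snd rcv) (ha : x.MovesInf a)
    (hab : x.Interlocked a b) (h1 : (mergeRun hP ha hab).MovesInf 1) (k : ℕ) :
    (x.mergeCursor a b k).alive := by
  by_contra hk
  have hdead : ∀ t, (x.mergeCursor a b (k + t)).alive = false ∧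
      x.mergeMove a b (x.mergeCursor a b (k + t)) = .internal0 := by
    intro t
    induction t with
    | zero => exact ⟨by simpa using hk, by simp [mergeMove, by simpa using hk]⟩
    | succ t ih =>
      have hal : (x.mergeCursor a b (k + (t + 1))).alive = false := by
        rw [← Nat.add_assoc, mergeCursor_succ x a b (k + t)]
        simp only [mergeStep, ih.2, ih.1]
      exact ⟨hal, by simp [mergeMove, hal]⟩
  obtain ⟨k', hk'mem, hk'⟩ := h1.exists_gt k
  obtain ⟨t, rfl⟩ := Nat.exists_eq_add_of_lt hk'
  exact (MergeMove.one_mem_sched_iff _).1 hk'mem (by simpa [Nat.add_assoc] using (hdead (t + 1)).2)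

theorem tracks_mergeRun_zero (hP : P.IsTemplate snd rcv) (ha : x.MovesInf a)
    (hab : x.Interlocked a b) :
    (mergeRun hP ha hab).Tracks 0 x a fun k => (x.mergeCursor a b k).s where
  zero := rfl
  stay k hk := by
    have h := not_not.1 ((MergeMove.zero_mem_sched_iff _).not.1 hk)
    simp [mergeStep, h]
  move k hk := by
    have hex := ha.exists_ge (x.mergeCursor a b k).s
    refine ⟨hex, ?_, by simp [mergeRun, mergeState, x.state_nextMove hex],
      by simp [mergeRun, mergeInp]⟩
    have h := (MergeMove.zero_mem_sched_iff _).1 hk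
    simp only [mergeCursor_succ, mergeStep]
    cases h' : x.mergeMove a b (x.mergeCursor a b k)
    · rfl
    · exact absurd h' h
    · rfl
    · rfl

theorem tracks_mergeRun_one (hP : P.IsTemplate snd rcv) (ha : x.MovesInf a)
    (hab : x.Interlocked a b) (hal : ∀ k, (x.mergeCursor a b k).alive) :
    (mergeRun hP ha hab).Tracks 1 x b fun k => (x.mergeCursor a b k).u where
  zero := rfl
  stay k hk := by
    have h := not_not.1 ((MergeMove.one_mem_sched_iff _).not.1 hk)
    simp [mergeStep, h]
  move k hk := by
    have hnot0 := (MergeMove.one_mem_sched_iff _).1 hk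
    have hmove : (∃ τ, (x.mergeCursor a b k).u ≤ τ ∧ b ∈ x.sched τ) ∧
        x.mergeMove a b (x.mergeCursor a b k) ≠ .abandon ∧
        (x.mergeCursor a b (k + 1)).u = x.nextMove b (x.mergeCursor a b k).u + 1 := by
      have hal' := hal (k + 1)
      simp only [mergeCursor_succ, mergeStep] at hal' ⊢
      cases h : x.mergeMove a b (x.mergeCursor a b k)
      · exact absurd h hnot0
      · obtain ⟨-, ⟨W, hW, hWtm⟩, -⟩ := mergeMove_eq_internal1 h
        exact ⟨⟨W, hW, hWtm.elim And.left And.left⟩, by simp, rfl⟩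
      · obtain ⟨-, -, ⟨W, hW, hWtm⟩, -⟩ := mergeMove_eq_pass h
        exact ⟨⟨W, hW, hWtm.elim And.left And.left⟩, by simp, rfl⟩
      · simp [h] at hal'
    obtain ⟨hex, hne, hu⟩ := hmove
    exact ⟨hex, hu, by simp [mergeRun, mergeState, hal k, x.state_nextMove hex],
      by simp [mergeRun, mergeInp, hne]⟩

theorem Interlocked.exists_twoRing (hab : x.Interlocked a b) (hP : P.IsTemplate snd rcv)
    (ha : x.MovesInf a) :
    ∃ y : SysRun P (fun _ => False) 2 (P.interleavingStep snd rcv),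
      y.MovesInf 0 ∧ y.localWord 0 = x.localWord a ∧
        (y.MovesInf 1 → x.MovesInf b ∧ y.localWord 1 = x.localWord b) := by
  have h0 := mergeRun_movesInf_zero hP ha hab
  refine ⟨mergeRun hP ha hab, h0, (tracks_mergeRun_zero hP ha hab).localWord_eq h0,
    fun h1 => ?_⟩
  have ht := tracks_mergeRun_one hP ha hab (alive_of_mergeRun_movesInf_one hP ha hab h1)
  exact ⟨ht.movesInf h1, ht.localWord_eq h1⟩

theorem exists_interlocked (hP : P.IsTemplate snd rcv) (hn : 2 ≤ n) (j : Fin n) :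
    ∃ c, x.Interlocked j c := by
  obtain ⟨p, hp0, hpu⟩ := x.init_token
  have hp : ∀ v, P.tok (x.state 0 v) ↔ v = p := fun v => ⟨hpu v, fun h => h ▸ hp0⟩
  by_cases hj : j = p
  · subst hj
    exact ⟨ringSucc j, ⟨by simp [hp, ringSucc_ne_self hn],
      x.count_receives_holder_le_count_sends hP hp _⟩⟩
  · exact ⟨p, ⟨by simp [hp, hj], x.count_receives_le_count_sends_holder hP hp _⟩⟩

end SysRun

/-- Emerson–Namjoshi cutoff, Theorem 3 of [Emerso03]:
for interleaving parameterized token rings with no global inputs and parameterized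
specifications `∀i. A_{∀i.ass(i)} φ(i)`, where `ass(i)` and `φ(i)` are LTL formulas
over the inputs and outputs of process `i`, the number 2 is a cutoff. -/
theorem cutoff_two_interleaving_oneIndexed
    {O I : Type} (snd : O) (rcv : I)
    (T : TemplateF O I snd rcv) (ass φ : LTL (O ⊕ I)) :
    SatSpec1 T.P (fun _ => False) 2 (T.P.interleavingStep snd rcv) ass φ ↔
      ∀ n, 2 ≤ n → SatSpec1 T.P (fun _ => False) n (T.P.interleavingStep snd rcv) ass φ := by
  refine ⟨fun h2 n hn x hass j hj => ?_, fun h => h 2 le_rfl⟩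
  obtain ⟨c, hjc⟩ := x.exists_interlocked T.ax hn j
  obtain ⟨y, hy0, hw0, hw1⟩ := hjc.exists_twoRing T.ax hj
  have hyass : ∀ i, y.LocalSat ass i := by
    intro i
    fin_cases i
    · exact fun _ => hw0 ▸ hass j hj
    · exact fun hy1 => (hw1 hy1).2 ▸ hass c (hw1 hy1).1
  simpa only [SysRun.LocalSat, hw0] using h2 y hyass 0 hy0
end

section
/- Token rings are rotation-symmetric: let P be a process template, n ≥ 2, let ∀k.ass(k) be a 1-indexed LTL assumption over the inputs and outputs of a single process, and let ψ(i,j) be an LTL\X formula over the outputs of two processes. Then for all indices i ≠ j in {0,…,n−1}, the fully asynchronous token ring P^{R(n)} has a run satisfying ∀k.ass(k) and ψ(i,j) if and only if it has a run satisfying ∀k.ass(k) and ψ(0, j ⊖ i), where ⊖ denotes subtraction modulo n. -/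
/-! Relabelling the processes of a run along an automorphism of the ring `R(n)`, such as the
rotation `v ↦ v + i`, yields again a run: initial states, global inputs and the fully
asynchronous step relation are invariant under it. The relabelled run has the same local runs,
permuted, so `∀k.ass(k)` is preserved, and its output word for the pair `(0, j - i)` is that of
the original run for `(i, j)`. -/

lemma ringSucc_eq_add_one {n : ℕ} [NeZero n] (v : Fin n) : ringSucc v = v + 1 := by
  ext
  simp [ringSucc, Fin.val_add]

lemma ringSucc_add {n : ℕ} [NeZero n] (v d : Fin n) : ringSucc (v + d) = ringSucc v + d := by
  simp only [ringSucc_eq_add_one, add_right_comm]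

lemma ringSucc_sub {n : ℕ} [NeZero n] (v d : Fin n) : ringSucc (v - d) = ringSucc v - d := by
  simp only [ringSucc_eq_add_one, sub_add_eq_add_sub]

def StepRel.Invariant {Q I : Type} {n : ℕ} (R : StepRel Q I n) (e : Equiv.Perm (Fin n)) :
    Prop :=
  ∀ M s inp s', R M s inp s' → R (e ⁻¹' M) (s ∘ e) (inp ∘ e) (s' ∘ e)

namespace RawProc

variable {Q O I : Type} {P : RawProc Q O I} {snd : O} {rcv : I} {n : ℕ}
  {e : Equiv.Perm (Fin n)} {M : Set (Fin n)} {s s' : Fin n → Q} {inp : Fin n → I → Prop}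

lemma internalStep.comp (h : P.internalStep snd rcv M s inp s') :
    P.internalStep snd rcv (e ⁻¹' M) (s ∘ e) (inp ∘ e) (s' ∘ e) :=
  ⟨fun u hu => h.1 (e u) hu, fun u hu => h.2 (e u) hu⟩

lemma tokenStepFrom.comp (he : ∀ v, ringSucc (e v) = e (ringSucc v)) {v : Fin n}
    (h : P.tokenStepFrom snd rcv v M s inp s') :
    P.tokenStepFrom snd rcv (e.symm v) (e ⁻¹' M) (s ∘ e) (inp ∘ e) (s' ∘ e) := by
  obtain ⟨hv, hsucc, hsnd, hsnd_uniq, hrcv, hrcv_uniq, hdelta, hidle⟩ := h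
  have he_succ : e (ringSucc (e.symm v)) = ringSucc v := by rw [← he, e.apply_symm_apply]
  refine ⟨?_, ?_, ?_, ?_, ?_, ?_, fun u hu => hdelta (e u) hu, fun u hu => hidle (e u) hu⟩
  · simpa using hv
  · simpa [Set.mem_preimage, he_succ] using hsucc
  · simpa using hsnd
  · exact fun u hu hne => hsnd_uniq (e u) hu (by rwa [Ne, ← e.eq_symm_apply])
  · simpa [he_succ] using hrcv
  · exact fun u hu hne => hrcv_uniq (e u) hu (by rwa [Ne, ← he_succ, e.apply_eq_iff_eq])

lemma asyncStep_invariant (he : ∀ v, ringSucc (e v) = e (ringSucc v)) :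
    StepRel.Invariant (P.asyncStep snd rcv) e := by
  rintro M s inp s' (h | ⟨v, h⟩)
  · exact .inl h.comp
  · exact .inr ⟨e.symm v, h.comp he⟩

end RawProc

namespace SysRun

variable {Q O I : Type} {P : RawProc Q O I} {isGlob : I → Prop} {n : ℕ} {R : StepRel Q I n}
  {e : Equiv.Perm (Fin n)}

def comap (x : SysRun P isGlob n R) (e : Equiv.Perm (Fin n)) (hR : R.Invariant e) :
    SysRun P isGlob n R where
  state k := x.state k ∘ e
  inp k := x.inp k ∘ e
  sched k := e ⁻¹' x.sched k
  init_state v := x.init_state (e v)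
  init_token := e.existsUnique_congr_right.mpr x.init_token
  glob_consistent k v w := x.glob_consistent k (e v) (e w)
  step k := hR _ _ _ _ (x.step k)

variable (x : SysRun P isGlob n R) (hR : R.Invariant e)

lemma localSat_comap (φ : LTL (O ⊕ I)) (v : Fin n) :
    (x.comap e hR).LocalSat φ v ↔ x.LocalSat φ (e v) :=
  Iff.rfl

lemma sat2At_comap (ψ : LTL (O ⊕ O)) (i j : Fin n) :
    (x.comap e hR).Sat2At ψ i j ↔ x.Sat2At ψ (e i) (e j) :=
  Iff.rfl

end SysRun

lemma exists_run_sat2At_of_invariant {Q O I : Type} {P : RawProc Q O I} {isGlob : I → Prop}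
    {n : ℕ} {R : StepRel Q I n} {e : Equiv.Perm (Fin n)} (hR : R.Invariant e)
    (ass : LTL (O ⊕ I)) (ψ : LTL (O ⊕ O)) (i j : Fin n)
    (h : ∃ x : SysRun P isGlob n R, (∀ k, x.LocalSat ass k) ∧ x.Sat2At ψ (e i) (e j)) :
    ∃ x : SysRun P isGlob n R, (∀ k, x.LocalSat ass k) ∧ x.Sat2At ψ i j := by
  obtain ⟨x, hass, hψ⟩ := h
  exact ⟨x.comap e hR, fun k => (x.localSat_comap hR ass k).mpr (hass (e k)),
    (x.sat2At_comap hR ψ i j).mpr hψ⟩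

/-- rotation symmetry of token rings: for a process template `P`,
a ring size `n ≥ 2`, a 1-indexed LTL assumption `ass` and an LTL\X formula `ψ(i,j)`
over the outputs of two processes, and indices `i ≠ j`: the fully asynchronous ring
`P^{R(n)}` has a run satisfying `∀k.ass(k)` and `ψ(i,j)` iff it has a run satisfying
`∀k.ass(k)` and `ψ(0, j ⊖ i)` (subtraction modulo `n`). -/
theorem token_ring_rotation_symmetric
    {O I : Type} (snd : O) (rcv : I) (isGlob : I → Prop)
    (T : Template O I snd rcv) (n : ℕ) (hn : 2 ≤ n)
    (ass : LTL (O ⊕ I)) (ψ : LTL (O ⊕ O))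
    (i j : Fin n) :
    (∃ x : SysRun T.P isGlob n (T.P.asyncStep snd rcv),
        (∀ k, x.LocalSat ass k) ∧ x.Sat2At ψ i j) ↔
    (∃ x : SysRun T.P isGlob n (T.P.asyncStep snd rcv),
        (∀ k, x.LocalSat ass k) ∧ x.Sat2At ψ (⟨0, by omega⟩ : Fin n) (j - i)) := by
  have : NeZero n := ⟨by omega⟩
  have h0 : (⟨0, by omega⟩ : Fin n) = 0 := rfl
  rw [h0]
  constructor
  · intro h
    refine exists_run_sat2At_of_invariant (e := Equiv.addRight i)
      (RawProc.asyncStep_invariant fun v => ringSucc_add v i) ass ψ 0 (j - i) ?_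
    simpa using h
  · intro h
    refine exists_run_sat2At_of_invariant (e := Equiv.subRight i)
      (RawProc.asyncStep_invariant fun v => ringSucc_sub v i) ass ψ i j ?_
    simpa using h
end

section
/- Token circulation: let n ≥ 1 and let tok_i, send_i : ℕ → Prop for i ∈ ℤ/nℤ satisfy: (1) at time 0 exactly one index i has tok_i(0); (2) for all i, k: send_i(k) → tok_i(k); (3) for all i, k: tok_i(k) ∧ ¬send_i(k) → tok_i(k+1); (4) for all i, k: ¬tok_i(k) ∧ ¬send_{i−1}(k) → ¬tok_i(k+1); (5) for all i, k: send_i(k) → ¬tok_i(k+1) ∧ tok_{i+1}(k+1); (6) for all i, k: tok_i(k) → ∃m ≥ k, send_i(m). Then at every time k exactly one index i has tok_i(k), and every index has the token infinitely often: for all i and k there exists m ≥ k with tok_i(m). -/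
/-!
Uniqueness of the token is an induction on time: if `i` is the only holder at time `k`, a
process `j ≠ i` can acquire the token only when its predecessor sends, and only the holder sends,
so `j = i + 1`. Hence the token is held by `i + 1` or by `i` at time `k + 1`, according as `i`
sends or not. Circulation: the holder eventually sends, so the token advances one step along the
ring; iterating `d` times it reaches `j + d`, and in `ZMod n` every index has this form.
-/

section TokenRing

variable {α : Type*} {tok send : α → ℕ → Prop}

theorem send_and_eq_add_one_of_tok_succ [AddGroupWithOne α]
    (h2 : ∀ i k, send i k → tok i k)
    (h4 : ∀ i k, ¬ tok i k → ¬ send (i - 1) k → ¬ tok i (k + 1))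
    {i j : α} {k : ℕ} (hi : ∀ j, tok j k → j = i) (hji : j ≠ i) (hj : tok j (k + 1)) :
    send i k ∧ j = i + 1 := by
  have hsend : send (j - 1) k := by
    by_contra hs
    exact h4 j k (fun ht => hji (hi j ht)) hs hj
  have hpred : j - 1 = i := hi _ (h2 _ _ hsend)
  exact ⟨hpred ▸ hsend, sub_eq_iff_eq_add.mp hpred⟩

theorem existsUnique_tok_succ [AddGroupWithOne α]
    (h2 : ∀ i k, send i k → tok i k)
    (h3 : ∀ i k, tok i k → ¬ send i k → tok i (k + 1))
    (h4 : ∀ i k, ¬ tok i k → ¬ send (i - 1) k → ¬ tok i (k + 1))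
    (h5 : ∀ i k, send i k → ¬ tok i (k + 1) ∧ tok (i + 1) (k + 1))
    {k : ℕ} (hk : ∃! i, tok i k) : ∃! i, tok i (k + 1) := by
  obtain ⟨i, hti, hi⟩ := hk
  by_cases hs : send i k
  · refine ⟨i + 1, (h5 i k hs).2, fun j hj => ?_⟩
    have hji : j ≠ i := by
      rintro rfl
      exact (h5 j k hs).1 hj
    exact (send_and_eq_add_one_of_tok_succ h2 h4 hi hji hj).2
  · refine ⟨i, h3 i k hti hs, fun j hj => ?_⟩
    by_contra hji
    exact hs (send_and_eq_add_one_of_tok_succ h2 h4 hi hji hj).1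

theorem existsUnique_tok [AddGroupWithOne α]
    (h1 : ∃! i, tok i 0)
    (h2 : ∀ i k, send i k → tok i k)
    (h3 : ∀ i k, tok i k → ¬ send i k → tok i (k + 1))
    (h4 : ∀ i k, ¬ tok i k → ¬ send (i - 1) k → ¬ tok i (k + 1))
    (h5 : ∀ i k, send i k → ¬ tok i (k + 1) ∧ tok (i + 1) (k + 1)) (k : ℕ) :
    ∃! i, tok i k := by
  induction k with
  | zero => exact h1
  | succ k ih => exact existsUnique_tok_succ h2 h3 h4 h5 ih

theorem exists_tok_add_nat [AddMonoidWithOne α]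
    (hpass : ∀ i k, send i k → tok (i + 1) (k + 1))
    (h6 : ∀ i k, tok i k → ∃ m, k ≤ m ∧ send i m) (d : ℕ) :
    ∀ {i : α} {k : ℕ}, tok i k → ∃ m, k ≤ m ∧ tok (i + d) m := by
  induction d with
  | zero => exact fun {_ k} h => ⟨k, le_rfl, by simpa only [Nat.cast_zero, add_zero] using h⟩
  | succ d ih =>
    intro i k h
    obtain ⟨m, hkm, hs⟩ := h6 i k h
    obtain ⟨m', hm', ht⟩ := ih (hpass i m hs)
    refine ⟨m', by omega, ?_⟩
    rwa [Nat.cast_succ, Nat.cast_add_one_comm, ← add_assoc]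

end TokenRing

/-- token circulation: let `n ≥ 1` and let `tok i k` / `send i k`
(for `i ∈ ℤ/nℤ`, `k ∈ ℕ`) satisfy:
(1) at time 0 exactly one index has the token;
(2) a process sends only if it has the token;
(3) a process that has the token and does not send keeps it;
(4) a process without the token does not acquire it unless its ring predecessor sends;
(5) a sent token is received by the ring successor in the next step (and lost by the sender);
(6) a process holding the token eventually sends it.
Then at every time exactly one index has the token, and every index has the token
infinitely often. -/
theorem token_circulation (n : ℕ) (hn : 1 ≤ n)
    (tok send : ZMod n → ℕ → Prop)
    (h1 : ∃! i : ZMod n, tok i 0)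
    (h2 : ∀ i k, send i k → tok i k)
    (h3 : ∀ i k, tok i k → ¬ send i k → tok i (k + 1))
    (h4 : ∀ i k, ¬ tok i k → ¬ send (i - 1) k → ¬ tok i (k + 1))
    (h5 : ∀ i k, send i k → ¬ tok i (k + 1) ∧ tok (i + 1) (k + 1))
    (h6 : ∀ i k, tok i k → ∃ m, k ≤ m ∧ send i m) :
    (∀ k, ∃! i : ZMod n, tok i k) ∧ (∀ (i : ZMod n) (k : ℕ), ∃ m, k ≤ m ∧ tok i m) := by
  have : NeZero n := ⟨by omega⟩
  have huniq := existsUnique_tok h1 h2 h3 h4 h5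
  refine ⟨huniq, fun i k => ?_⟩
  obtain ⟨j, hj, -⟩ := huniq k
  have hi : j + ((i - j).val : ZMod n) = i := by
    rw [ZMod.natCast_zmod_val, add_sub_cancel]
  simpa only [hi] using exists_tok_add_nat (fun i k hs => (h5 i k hs).2) h6 (i - j).val hj
end

section
/- Correctness of the bounded-synthesis ranking-function encoding: let G = (V, E) be a finite directed graph, Init ⊆ V a set of initial vertices, and F ⊆ V a set of accepting vertices. There exists a function ρ : V → ℤ such that ρ(v) ≥ 0 for every v ∈ Init, and for every edge (u, w) ∈ E with ρ(u) ≥ 0 one has ρ(w) > ρ(u) if w ∈ F and ρ(w) ≥ ρ(u) if w ∉ F, if and only if no cycle of G that is reachable from Init contains a vertex of F. -/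
/-!
A ranking is monotone along paths that start at a nonnegative value and strictly increases
whenever a path enters `F`, so along a cycle through a reachable accepting vertex it would
exceed itself. Conversely, if no reachable accepting vertex lies on a cycle, rank each
reachable vertex `v` by the number of reachable accepting vertices from which `v` can be
reached, and every unreachable vertex by `-1`. This count cannot drop along an edge, and an
edge entering an accepting vertex `w` adds `w` itself, which is new since `w` lies on no cycle.
-/

open Relation

namespace BoundedSynthesis

variable {V : Type*}

def IsRanking (r : V → V → Prop) (F : Set V) (ρ : V → ℤ) : Prop :=
  ∀ u w, r u w → 0 ≤ ρ u → (w ∈ F → ρ u < ρ w) ∧ (w ∉ F → ρ u ≤ ρ w)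

def Reachable (r : V → V → Prop) (Init : Set V) (v : V) : Prop :=
  ∃ i ∈ Init, ReflTransGen r i v

section Soundness

variable {r : V → V → Prop} {F : Set V} {ρ : V → ℤ}

theorem IsRanking.le_of_edge (hρ : IsRanking r F ρ) {u w : V} (huw : r u w) (hu : 0 ≤ ρ u) :
    ρ u ≤ ρ w := by
  by_cases hw : w ∈ F
  · exact ((hρ u w huw hu).1 hw).le
  · exact (hρ u w huw hu).2 hw

theorem IsRanking.le_of_reflTransGen (hρ : IsRanking r F ρ) {a b : V} (hab : ReflTransGen r a b)
    (ha : 0 ≤ ρ a) : ρ a ≤ ρ b := by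
  induction hab with
  | refl => exact le_rfl
  | tail _ hcb ih => exact ih.trans (hρ.le_of_edge hcb (ha.trans ih))

theorem IsRanking.lt_of_transGen (hρ : IsRanking r F ρ) {a b : V} (hab : TransGen r a b)
    (hb : b ∈ F) (ha : 0 ≤ ρ a) : ρ a < ρ b := by
  obtain ⟨c, hac, hcb⟩ := TransGen.tail'_iff.mp hab
  have hle := hρ.le_of_reflTransGen hac ha
  exact hle.trans_lt ((hρ c b hcb (ha.trans hle)).1 hb)

theorem IsRanking.not_transGen_self (hρ : IsRanking r F ρ) {v : V} (hv : v ∈ F) (h0 : 0 ≤ ρ v) :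
    ¬ TransGen r v v :=
  fun hcyc => (hρ.lt_of_transGen hcyc hv h0).false

end Soundness

section Completeness

variable (r : V → V → Prop) (Init F : Set V)

def acceptingAncestors (v : V) : Set V :=
  {f | f ∈ F ∧ Reachable r Init f ∧ ReflTransGen r f v}

open Classical in
noncomputable def canonicalRank (v : V) : ℤ :=
  if Reachable r Init v then ((acceptingAncestors r Init F v).ncard : ℤ) else -1

variable {r Init F}

theorem Reachable.tail {u w : V} (hu : Reachable r Init u) (huw : r u w) : Reachable r Init w :=
  let ⟨i, hi, hiu⟩ := hu
  ⟨i, hi, hiu.tail huw⟩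

theorem acceptingAncestors_mono {u w : V} (huw : r u w) :
    acceptingAncestors r Init F u ⊆ acceptingAncestors r Init F w :=
  fun _ ⟨hf, hreach, hfu⟩ => ⟨hf, hreach, hfu.tail huw⟩

theorem acceptingAncestors_ssubset {u w : V} (huw : r u w) (hw : w ∈ F)
    (hwr : Reachable r Init w) (hacyc : ¬ TransGen r w w) :
    acceptingAncestors r Init F u ⊂ acceptingAncestors r Init F w :=
  (Set.ssubset_iff_of_subset (acceptingAncestors_mono huw)).mpr
    ⟨w, ⟨hw, hwr, ReflTransGen.refl⟩,
      fun ⟨_, _, hwu⟩ => hacyc (TransGen.tail'_iff.mpr ⟨u, hwu, huw⟩)⟩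

theorem canonicalRank_nonneg_of_reachable {v : V} (hv : Reachable r Init v) :
    0 ≤ canonicalRank r Init F v := by
  simp [canonicalRank, hv]

theorem reachable_of_canonicalRank_nonneg {v : V} (hv : 0 ≤ canonicalRank r Init F v) :
    Reachable r Init v := by
  by_contra h
  simp [canonicalRank, h] at hv

theorem isRanking_canonicalRank [Finite V]
    (hacyc : ∀ v ∈ F, Reachable r Init v → ¬ TransGen r v v) :
    IsRanking r F (canonicalRank r Init F) := by
  intro u w huw hu
  have hur := reachable_of_canonicalRank_nonneg hu
  have hwr := hur.tail huw
  simp only [canonicalRank, if_pos hur, if_pos hwr, Nat.cast_lt, Nat.cast_le]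
  exact ⟨fun hw => Set.ncard_lt_ncard (acceptingAncestors_ssubset huw hw hwr (hacyc w hw hwr)),
    fun _ => Set.ncard_le_ncard (acceptingAncestors_mono huw)⟩

end Completeness

end BoundedSynthesis

open BoundedSynthesis

/-- correctness of the bounded-synthesis ranking-function encoding:
for a finite directed graph `(V, E)` with initial vertices `Init` and accepting
vertices `F`, there exists a ranking function `ρ : V → ℤ` with `ρ(v) ≥ 0` on `Init`
such that along every edge `(u,w)` with `ρ(u) ≥ 0` the rank strictly increases if
`w ∈ F` and does not decrease otherwise, if and only if no cycle of the graph that is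
reachable from `Init` contains a vertex of `F`. -/
theorem bounded_synthesis_ranking_correct
    {V : Type} [Fintype V] (E : Set (V × V)) (Init F : Set V) :
    (∃ ρ : V → ℤ, (∀ v ∈ Init, 0 ≤ ρ v) ∧
        ∀ u w, (u, w) ∈ E → 0 ≤ ρ u →
          ((w ∈ F → ρ u < ρ w) ∧ (w ∉ F → ρ u ≤ ρ w))) ↔
    ¬ ∃ v, v ∈ F ∧
        (∃ i ∈ Init, Relation.ReflTransGen (fun a b => (a, b) ∈ E) i v) ∧
        Relation.TransGen (fun a b => (a, b) ∈ E) v v := by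
  constructor
  · rintro ⟨ρ, hInit, hρ⟩ ⟨v, hvF, ⟨i, hi, hiv⟩, hcyc⟩
    have hv : 0 ≤ ρ v := (hInit i hi).trans (IsRanking.le_of_reflTransGen hρ hiv (hInit i hi))
    exact IsRanking.not_transGen_self hρ hvF hv hcyc
  · intro hno
    exact ⟨canonicalRank _ Init F,
      fun v hv => canonicalRank_nonneg_of_reachable ⟨v, hv, ReflTransGen.refl⟩,
      isRanking_canonicalRank fun v hvF hv hcyc => hno ⟨v, hvF, hv, hcyc⟩⟩
end
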